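/- Let A be any m×n matrix over F_2, and let A_s be the slush minor of A. Then the set U = V_s(A) \ F(A_s) of slush variable nodes that are not frozen in A_s is a flipper of A_s, its size satisfies |U| ≥ |V_s(A)| − |C_s(A)|, and U ∩ F(A) = ∅ (no variable in U is frozen in A). -/
import Mathlib


open Filter Topology MeasureTheory ProbabilityTheory

noncomputable section

/-- `φ_d(α) = 1 − exp(−d·exp(−d(1−α)))`. -/
def phiFn (d α : ℝ) : ℝ := 1 - Real.exp (-d * Real.exp (-d * (1 - α)))

/-- `Φ_d(α) = exp(−d·exp(−d(1−α))) + (1 + d(1−α))·exp(−d(1−α)) − 1`. -/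
def PhiFn (d α : ℝ) : ℝ :=
  Real.exp (-d * Real.exp (-d * (1 - α))) + (1 + d * (1 - α)) * Real.exp (-d * (1 - α)) - 1

/-- `α_*(d)`: the smallest fixed point of `φ_d` in `[0,1]`. -/
def alphaMin (d : ℝ) : ℝ := sInf {α : ℝ | α ∈ Set.Icc (0:ℝ) 1 ∧ phiFn d α = α}

/-- `α^*(d)`: the largest fixed point of `φ_d` in `[0,1]`. -/
def alphaMax (d : ℝ) : ℝ := sSup {α : ℝ | α ∈ Set.Icc (0:ℝ) 1 ∧ phiFn d α = α}

/-- `α_0(d)`: for `d ≤ e` equal to `α_*(d)`; for `d > e` the unique fixed point of `φ_d`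
in the open interval `(α_*(d), α^*(d))`. -/
def alphaMid (d : ℝ) : ℝ :=
  if d ≤ Real.exp 1 then alphaMin d
  else sInf {α : ℝ | α ∈ Set.Ioo (alphaMin d) (alphaMax d) ∧ phiFn d α = α}

/-- An `m × n` matrix over `F_2`. -/
abbrev Mat (m n : ℕ) := Fin m → Fin n → ZMod 2

/-- Matrix-vector multiplication over `F_2`. -/
def matMulVec {m n : ℕ} (A : Mat m n) (x : Fin n → ZMod 2) : Fin m → ZMod 2 :=
  fun i => ∑ j, A i j * x j

/-- Coordinate `i` is frozen in `A`: every kernel vector vanishes there. -/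
def frozen {m n : ℕ} (A : Mat m n) (i : Fin n) : Prop :=
  ∀ x : Fin n → ZMod 2, matMulVec A x = 0 → x i = 0

/-- `f(A) = |F(A)|/n`, the fraction of frozen coordinates. -/
def frozenFrac {m n : ℕ} (A : Mat m n) : ℝ :=
  (({i : Fin n | frozen A i}).ncard : ℝ) / (n : ℝ)

/-- Bernoulli(p) law on `F_2`, giving mass `p` to `1` and `1−p` to `0`. -/
def bern (p : ℝ) : Measure (ZMod 2) :=
  ENNReal.ofReal p • Measure.dirac 1 + ENNReal.ofReal (1 - p) • Measure.dirac 0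

/-- The law of the random matrix `A(n,d)`: entries i.i.d. Bernoulli with `p = min(d/n, 1)`. -/
def matrixLaw (n : ℕ) (d : ℝ) : Measure (Mat n n) :=
  Measure.pi fun _ : Fin n => Measure.pi fun _ : Fin n => bern (min (d / (n : ℝ)) 1)

/-- Warning Propagation message values: frozen, slush, unfrozen. -/
inductive Msg
  | f | s | u
deriving DecidableEq

/-- One round of check-to-variable updates, from the variable-to-check messages `wvc`. -/
def stepCV {m n : ℕ} (A : Mat m n) (wvc : Fin n → Fin m → Msg) (a : Fin m) (v : Fin n) : Msg :=
  if ∀ y : Fin n, y ≠ v → A a y = 1 → wvc y a = Msg.f then Msg.f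
  else if ∃ y : Fin n, y ≠ v ∧ A a y = 1 ∧ wvc y a = Msg.u then Msg.u
  else Msg.s

/-- One round of variable-to-check updates, from the (current) check-to-variable
messages `wcv`. -/
def stepVC {m n : ℕ} (A : Mat m n) (wcv : Fin m → Fin n → Msg) (v : Fin n) (a : Fin m) : Msg :=
  if ∀ b : Fin m, b ≠ a → A b v = 1 → wcv b v = Msg.u then Msg.u
  else if ∃ b : Fin m, b ≠ a ∧ A b v = 1 ∧ wcv b v = Msg.f then Msg.f
  else Msg.s

/-- Warning Propagation messages at time `t`: first component is `w_{a→v}(A,t)`,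
second is `w_{v→a}(A,t)`; all messages are `s` at time `0`. -/
def wp {m n : ℕ} (A : Mat m n) : ℕ → (Fin m → Fin n → Msg) × (Fin n → Fin m → Msg)
  | 0 => (fun _ _ => Msg.s, fun _ _ => Msg.s)
  | t + 1 => (stepCV A (wp A t).2, stepVC A (stepCV A (wp A t).2))

open Classical in
/-- The limiting check-to-variable message `w_{a→v}(A)`. -/
def wCVlim {m n : ℕ} (A : Mat m n) (a : Fin m) (v : Fin n) : Msg :=
  if h : ∃ x : Msg, ∀ᶠ t in Filter.atTop, (wp A t).1 a v = x then h.choose else Msg.s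

open Classical in
/-- The limiting variable-to-check message `w_{v→a}(A)`. -/
def wVClim {m n : ℕ} (A : Mat m n) (v : Fin n) (a : Fin m) : Msg :=
  if h : ∃ x : Msg, ∀ᶠ t in Filter.atTop, (wp A t).2 v a = x then h.choose else Msg.s

/-- `V_f(A)`: variables receiving some limiting `f`-message. -/
def Vf {m n : ℕ} (A : Mat m n) : Set (Fin n) :=
  {v | ∃ a : Fin m, A a v = 1 ∧ wCVlim A a v = Msg.f}

/-- `V_u(A)`: variables all of whose incoming limiting messages are `u`. -/
def Vu {m n : ℕ} (A : Mat m n) : Set (Fin n) :=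
  {v | ∀ a : Fin m, A a v = 1 → wCVlim A a v = Msg.u}

/-- `V_s(A)`: the slush variables. -/
def Vslush {m n : ℕ} (A : Mat m n) : Set (Fin n) :=
  {v | (∀ a : Fin m, A a v = 1 → wCVlim A a v ≠ Msg.f) ∧
       2 ≤ ({a : Fin m | A a v = 1 ∧ wCVlim A a v = Msg.s}).ncard}

/-- `C_s(A)`: the slush checks. -/
def Cslush {m n : ℕ} (A : Mat m n) : Set (Fin m) :=
  {a | (∀ v : Fin n, A a v = 1 → wVClim A v a ≠ Msg.u) ∧
       2 ≤ ({v : Fin n | A a v = 1 ∧ wVClim A v a = Msg.s}).ncard}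

open Classical in
/-- `v` is frozen in the slush minor `A_s` of `A` (rows `C_s(A)`, columns `V_s(A)`):
every vector in the kernel of the minor vanishes at `v`. -/
def slushFrozen {m n : ℕ} (A : Mat m n) (v : Fin n) : Prop :=
  ∀ x : Fin n → ZMod 2,
    (∀ a ∈ Cslush A, (∑ u : Fin n, if u ∈ Vslush A then A a u * x u else 0) = 0) →
    x v = 0

section WPlemmas

variable {m n : ℕ} (A : Mat m n)

/-- `x = s` or `x = y`: a message can only grow from `s`. -/
def mle (x y : Msg) : Prop := x = Msg.s ∨ x = y

lemma mle_of_eq {x y : Msg} (h : x = y) : mle x y := Or.inr h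

lemma mle_f {x y : Msg} (h : mle x y) (hx : x = Msg.f) : y = Msg.f := by
  rcases h with h | h <;> simp_all

lemma mle_u {x y : Msg} (h : mle x y) (hx : x = Msg.u) : y = Msg.u := by
  rcases h with h | h <;> simp_all

lemma stepCV_mono {w w' : Fin n → Fin m → Msg}
    (h : ∀ y a, mle (w y a) (w' y a)) (a : Fin m) (v : Fin n) :
    mle (stepCV A w a v) (stepCV A w' a v) := by
  unfold stepCV
  by_cases h1 : ∀ y : Fin n, y ≠ v → A a y = 1 → w y a = Msg.f
  · have h1' : ∀ y : Fin n, y ≠ v → A a y = 1 → w' y a = Msg.f :=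
      fun y hy hA => mle_f (h y a) (h1 y hy hA)
    rw [if_pos h1, if_pos h1']; exact Or.inr rfl
  · rw [if_neg h1]
    by_cases h2 : ∃ y : Fin n, y ≠ v ∧ A a y = 1 ∧ w y a = Msg.u
    · obtain ⟨y, hy, hA, hu⟩ := h2
      have hu' : w' y a = Msg.u := mle_u (h y a) hu
      have h1' : ¬ ∀ y : Fin n, y ≠ v → A a y = 1 → w' y a = Msg.f := by
        intro hc; have := hc y hy hA; simp_all
      have h2' : ∃ y : Fin n, y ≠ v ∧ A a y = 1 ∧ w' y a = Msg.u := ⟨y, hy, hA, hu'⟩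
      rw [if_pos ⟨y, hy, hA, hu⟩, if_neg h1', if_pos h2']
      exact Or.inr rfl
    · rw [if_neg h2]; exact Or.inl rfl

lemma stepVC_mono {w w' : Fin m → Fin n → Msg}
    (h : ∀ b y, mle (w b y) (w' b y)) (v : Fin n) (a : Fin m) :
    mle (stepVC A w v a) (stepVC A w' v a) := by
  unfold stepVC
  by_cases h1 : ∀ b : Fin m, b ≠ a → A b v = 1 → w b v = Msg.u
  · have h1' : ∀ b : Fin m, b ≠ a → A b v = 1 → w' b v = Msg.u :=
      fun b hb hA => mle_u (h b v) (h1 b hb hA)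
    rw [if_pos h1, if_pos h1']; exact Or.inr rfl
  · rw [if_neg h1]
    by_cases h2 : ∃ b : Fin m, b ≠ a ∧ A b v = 1 ∧ w b v = Msg.f
    · obtain ⟨b, hb, hA, hf⟩ := h2
      have hf' : w' b v = Msg.f := mle_f (h b v) hf
      have h1' : ¬ ∀ b : Fin m, b ≠ a → A b v = 1 → w' b v = Msg.u := by
        intro hc; have := hc b hb hA; simp_all
      have h2' : ∃ b : Fin m, b ≠ a ∧ A b v = 1 ∧ w' b v = Msg.f := ⟨b, hb, hA, hf'⟩
      rw [if_pos ⟨b, hb, hA, hf⟩, if_neg h1', if_pos h2']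
      exact Or.inr rfl
    · rw [if_neg h2]; exact Or.inl rfl

lemma wp_mono (t : ℕ) :
    (∀ a v, mle ((wp A t).1 a v) ((wp A (t+1)).1 a v)) ∧
    (∀ v a, mle ((wp A t).2 v a) ((wp A (t+1)).2 v a)) := by
  induction t with
  | zero => exact ⟨fun _ _ => Or.inl rfl, fun _ _ => Or.inl rfl⟩
  | succ t ih =>
    constructor
    · intro a v
      exact stepCV_mono A (fun y b => ih.2 y b) a v
    · intro v a
      exact stepVC_mono A (fun b y => stepCV_mono A (fun y' b' => ih.2 y' b') b y) v a

lemma persist1 {a : Fin m} {v : Fin n} {t t' : ℕ} (h : t ≤ t')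
    (hs : (wp A t).1 a v ≠ Msg.s) : (wp A t').1 a v = (wp A t).1 a v := by
  induction t', h using Nat.le_induction with
  | base => rfl
  | succ t' ht ih =>
    rcases (wp_mono A t').1 a v with h' | h'
    · rw [ih] at h'; exact absurd h' hs
    · rw [← h', ih]

lemma persist2 {v : Fin n} {a : Fin m} {t t' : ℕ} (h : t ≤ t')
    (hs : (wp A t).2 v a ≠ Msg.s) : (wp A t').2 v a = (wp A t).2 v a := by
  induction t', h using Nat.le_induction with
  | base => rfl
  | succ t' ht ih =>
    rcases (wp_mono A t').2 v a with h' | h'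
    · rw [ih] at h'; exact absurd h' hs
    · rw [← h', ih]

lemma exists_lim1 (a : Fin m) (v : Fin n) :
    ∃ x : Msg, ∀ᶠ t in Filter.atTop, (wp A t).1 a v = x := by
  by_cases h : ∃ t, (wp A t).1 a v ≠ Msg.s
  · obtain ⟨t, ht⟩ := h
    exact ⟨(wp A t).1 a v, Filter.eventually_atTop.2 ⟨t, fun t' h' => persist1 A h' ht⟩⟩
  · push_neg at h
    exact ⟨Msg.s, Filter.Eventually.of_forall h⟩

lemma exists_lim2 (v : Fin n) (a : Fin m) :
    ∃ x : Msg, ∀ᶠ t in Filter.atTop, (wp A t).2 v a = x := by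
  by_cases h : ∃ t, (wp A t).2 v a ≠ Msg.s
  · obtain ⟨t, ht⟩ := h
    exact ⟨(wp A t).2 v a, Filter.eventually_atTop.2 ⟨t, fun t' h' => persist2 A h' ht⟩⟩
  · push_neg at h
    exact ⟨Msg.s, Filter.Eventually.of_forall h⟩

lemma wCVlim_eventually (a : Fin m) (v : Fin n) :
    ∀ᶠ t in Filter.atTop, (wp A t).1 a v = wCVlim A a v := by
  have h := exists_lim1 A a v
  rw [wCVlim, dif_pos h]
  exact h.choose_spec

lemma wVClim_eventually (v : Fin n) (a : Fin m) :
    ∀ᶠ t in Filter.atTop, (wp A t).2 v a = wVClim A v a := by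
  have h := exists_lim2 A v a
  rw [wVClim, dif_pos h]
  exact h.choose_spec

lemma wVClim_of_wp {v : Fin n} {a : Fin m} {t : ℕ} {x : Msg} (hx : x ≠ Msg.s)
    (h : (wp A t).2 v a = x) : wVClim A v a = x := by
  obtain ⟨T, hT⟩ := Filter.eventually_atTop.1 (wVClim_eventually A v a)
  have h1 : (wp A (max t T)).2 v a = x := by
    rw [persist2 A (le_max_left t T) (by rw [h]; exact hx), h]
  rw [← hT (max t T) (le_max_right t T), h1]

lemma wCVlim_of_wp {a : Fin m} {v : Fin n} {t : ℕ} {x : Msg} (hx : x ≠ Msg.s)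
    (h : (wp A t).1 a v = x) : wCVlim A a v = x := by
  obtain ⟨T, hT⟩ := Filter.eventually_atTop.1 (wCVlim_eventually A a v)
  have h1 : (wp A (max t T)).1 a v = x := by
    rw [persist1 A (le_max_left t T) (by rw [h]; exact hx), h]
  rw [← hT (max t T) (le_max_right t T), h1]

lemma wVClim_exists_wp {v : Fin n} {a : Fin m} {x : Msg}
    (h : wVClim A v a = x) : ∃ t, (wp A t).2 v a = x := by
  obtain ⟨T, hT⟩ := Filter.eventually_atTop.1 (wVClim_eventually A v a)
  exact ⟨T, by rw [hT T le_rfl, h]⟩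

/-- There is a time at which all messages equal their limits. -/
lemma exists_fixed_time :
    ∃ T : ℕ, (∀ a v, (wp A T).1 a v = wCVlim A a v) ∧
             (∀ v a, (wp A T).2 v a = wVClim A v a) ∧
             (∀ a v, (wp A (T+1)).1 a v = wCVlim A a v) ∧
             (∀ v a, (wp A (T+1)).2 v a = wVClim A v a) := by
  have h1 : ∀ᶠ t in Filter.atTop, ∀ a v, (wp A t).1 a v = wCVlim A a v :=
    Filter.eventually_all.2 fun a => Filter.eventually_all.2 fun v => wCVlim_eventually A a v
  have h2 : ∀ᶠ t in Filter.atTop, ∀ v a, (wp A t).2 v a = wVClim A v a :=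
    Filter.eventually_all.2 fun v => Filter.eventually_all.2 fun a => wVClim_eventually A v a
  obtain ⟨T, hT⟩ := Filter.eventually_atTop.1 (h1.and h2)
  exact ⟨T, (hT T le_rfl).1, (hT T le_rfl).2, (hT (T+1) (Nat.le_succ T)).1,
    (hT (T+1) (Nat.le_succ T)).2⟩

lemma fixedCV (a : Fin m) (v : Fin n) :
    wCVlim A a v = stepCV A (fun y b => wVClim A y b) a v := by
  obtain ⟨T, h1, h2, h3, h4⟩ := exists_fixed_time A
  have : (wp A (T+1)).1 a v = stepCV A ((wp A T).2) a v := rfl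
  rw [h3 a v] at this
  rw [this]
  congr 1
  funext y b
  exact h2 y b

lemma fixedVC (v : Fin n) (a : Fin m) :
    wVClim A v a = stepVC A (fun b y => wCVlim A b y) v a := by
  obtain ⟨T, h1, h2, h3, h4⟩ := exists_fixed_time A
  have : (wp A (T+1)).2 v a = stepVC A ((wp A (T+1)).1) v a := rfl
  rw [h4 v a] at this
  rw [this]
  congr 1
  funext b y
  exact h3 b y

end WPlemmas

section Fixed
variable {m n : ℕ} (A : Mat m n)

lemma zmod2_eq_one {z : ZMod 2} (h : z ≠ 0) : z = 1 := by
  revert h; revert z; decide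

lemma F1 {y : Fin n} {a : Fin m} (h : wVClim A y a = Msg.u) :
    ∀ b : Fin m, b ≠ a → A b y = 1 → wCVlim A b y = Msg.u := by
  intro b hb hA
  have := fixedVC A y a
  rw [h] at this
  unfold stepVC at this
  split_ifs at this with h1 h2
  exact h1 b hb hA

lemma F2 {b : Fin m} {y : Fin n} (h : wCVlim A b y = Msg.u) :
    ∃ z : Fin n, z ≠ y ∧ A b z = 1 ∧ wVClim A z b = Msg.u := by
  have := fixedCV A b y
  rw [h] at this
  unfold stepCV at this
  split_ifs at this with h1 h2
  exact h2

lemma F3 {y : Fin n} {a : Fin m} (h : wVClim A y a = Msg.f) :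
    ∃ b : Fin m, b ≠ a ∧ A b y = 1 ∧ wCVlim A b y = Msg.f := by
  have := fixedVC A y a
  rw [h] at this
  unfold stepVC at this
  split_ifs at this with h1 h2
  exact h2

lemma F4 {a : Fin m} {v : Fin n}
    (h : ∀ y : Fin n, y ≠ v → A a y = 1 → wVClim A y a = Msg.f) :
    wCVlim A a v = Msg.f := by
  rw [fixedCV]
  unfold stepCV
  rw [if_pos h]

/-- Time-indexed versions, used in the induction. -/
lemma T1 {y : Fin n} {a : Fin m} {t : ℕ} (h : (wp A (t+1)).2 y a = Msg.u) :
    ∀ b : Fin m, b ≠ a → A b y = 1 → (wp A (t+1)).1 b y = Msg.u := by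
  intro b hb hA
  have he : (wp A (t+1)).2 y a = stepVC A ((wp A (t+1)).1) y a := rfl
  rw [he] at h
  unfold stepVC at h
  split_ifs at h with h1 h2
  exact h1 b hb hA

lemma T2 {b : Fin m} {y : Fin n} {t : ℕ} (h : (wp A (t+1)).1 b y = Msg.u) :
    ∃ z : Fin n, z ≠ y ∧ A b z = 1 ∧ (wp A t).2 z b = Msg.u := by
  have he : (wp A (t+1)).1 b y = stepCV A ((wp A t).2) b y := rfl
  rw [he] at h
  unfold stepCV at h
  split_ifs at h with h1 h2
  exact h2

lemma matMulVec_add (x y : Fin n → ZMod 2) (c : Fin m) :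
    matMulVec A (x + y) c = matMulVec A x c + matMulVec A y c := by
  simp [matMulVec, mul_add, Finset.sum_add_distrib]

lemma matMulVec_sum {ι : Type*} (s : Finset ι) (Z : ι → Fin n → ZMod 2) (c : Fin m) :
    matMulVec A (∑ b ∈ s, Z b) c = ∑ b ∈ s, matMulVec A (Z b) c := by
  simp only [matMulVec, Finset.sum_apply, Finset.mul_sum]
  exact Finset.sum_comm

lemma matMulVec_single (y : Fin n) (c : Fin m) :
    matMulVec A (fun w => if w = y then 1 else 0) c = A c y := by
  simp [matMulVec, mul_ite]

/-- Correction vectors: if `y` sends `u` to `a` at some time, then for any `β` there is a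
vector supported on `u`-senders whose image under `A` is `β` at row `a` and `0` elsewhere. -/
lemma correction (t : ℕ) :
    ∀ a : Fin m, ∀ y : Fin n, A a y = 1 → (wp A t).2 y a = Msg.u → ∀ β : ZMod 2,
    ∃ z : Fin n → ZMod 2,
      (∀ w, z w ≠ 0 → ∃ c, A c w = 1 ∧ wVClim A w c = Msg.u) ∧
      (∀ b, b ≠ a → matMulVec A z b = 0) ∧ matMulVec A z a = β := by
  induction t with
  | zero =>
    intro a y _ hu
    simp [wp] at hu
  | succ t ih =>
    intro a y hay hu β
    by_cases hβ : β = 0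
    · exact ⟨0, by simp, by intro b _; simp [matMulVec], by simp [matMulVec, hβ]⟩
    · have hβ1 : β = 1 := zmod2_eq_one hβ
      have key : ∀ b : Fin m, b ≠ a ∧ A b y = 1 →
          ∃ z : Fin n → ZMod 2,
            (∀ w, z w ≠ 0 → ∃ c, A c w = 1 ∧ wVClim A w c = Msg.u) ∧
            (∀ c, c ≠ b → matMulVec A z c = 0) ∧ matMulVec A z b = 1 := by
        rintro b ⟨hb, hby⟩
        have hcv : (wp A (t+1)).1 b y = Msg.u := T1 A hu b hb hby
        obtain ⟨w, hwy, hbw, hwu⟩ := T2 A hcv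
        exact ih b w hbw hwu 1
      classical
      set Z : Fin m → (Fin n → ZMod 2) :=
        fun b => if h : b ≠ a ∧ A b y = 1 then (key b h).choose else 0 with hZ
      have Zspec : ∀ b (h : b ≠ a ∧ A b y = 1),
          (∀ w, Z b w ≠ 0 → ∃ c, A c w = 1 ∧ wVClim A w c = Msg.u) ∧
          (∀ c, c ≠ b → matMulVec A (Z b) c = 0) ∧ matMulVec A (Z b) b = 1 := by
        intro b h
        rw [hZ]; simp only [dif_pos h]
        exact (key b h).choose_spec
      have Zzero : ∀ b, ¬ (b ≠ a ∧ A b y = 1) → Z b = 0 := by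
        intro b h; rw [hZ]; simp only [dif_neg h]
      refine ⟨(fun w => if w = y then 1 else 0) + ∑ b : Fin m, Z b, ?_, ?_, ?_⟩
      · intro w hw
        by_cases hwy : w = y
        · subst hwy
          exact ⟨a, hay, wVClim_of_wp A (by simp) hu⟩
        · have hsum : (∑ b : Fin m, Z b) w ≠ 0 := by
            simpa [Pi.add_apply, hwy] using hw
          rw [Finset.sum_apply] at hsum
          obtain ⟨b, _, hb⟩ := Finset.exists_ne_zero_of_sum_ne_zero hsum
          by_cases hcond : b ≠ a ∧ A b y = 1
          · exact (Zspec b hcond).1 w hb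
          · rw [Zzero b hcond] at hb; simp at hb
      · intro c hc
        rw [matMulVec_add, matMulVec_single, matMulVec_sum]
        by_cases hcy : A c y = 1
        · have hcond : c ≠ a ∧ A c y = 1 := ⟨hc, hcy⟩
          have : ∑ b : Fin m, matMulVec A (Z b) c = matMulVec A (Z c) c := by
            refine Finset.sum_eq_single c ?_ (by simp)
            intro b _ hbc
            by_cases hcond' : b ≠ a ∧ A b y = 1
            · exact (Zspec b hcond').2.1 c (by exact fun h => hbc h.symm)
            · rw [Zzero b hcond']; simp [matMulVec]
          rw [this, (Zspec c hcond).2.2, hcy]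
          decide
        · have hcy0 : A c y = 0 := by
            rcases (by decide : ∀ z : ZMod 2, z = 0 ∨ z = 1) (A c y) with h | h
            · exact h
            · exact absurd h hcy
          have : ∑ b : Fin m, matMulVec A (Z b) c = 0 := by
            refine Finset.sum_eq_zero ?_
            intro b _
            by_cases hcond' : b ≠ a ∧ A b y = 1
            · refine (Zspec b hcond').2.1 c ?_
              intro h; rw [h] at hcy; exact hcy hcond'.2
            · rw [Zzero b hcond']; simp [matMulVec]
          rw [this, hcy0]; simp
      · rw [matMulVec_add, matMulVec_single, matMulVec_sum]
        have : ∑ b : Fin m, matMulVec A (Z b) a = 0 := by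
          refine Finset.sum_eq_zero ?_
          intro b _
          by_cases hcond' : b ≠ a ∧ A b y = 1
          · exact (Zspec b hcond').2.1 a (fun h => hcond'.1 h.symm) |>.symm ▸
              ((Zspec b hcond').2.1 a (fun h => hcond'.1 h.symm))
          · rw [Zzero b hcond']; simp [matMulVec]
        rw [this, hay, hβ1]; simp

end Fixed

section Part3
variable {m n : ℕ} (A : Mat m n)

lemma vslush_no_u {v : Fin n} (hv : v ∈ Vslush A) (c : Fin m) :
    wVClim A v c ≠ Msg.u := by
  intro hu
  obtain ⟨h1, h2⟩ := hv
  obtain ⟨b, hbT, hbc⟩ := Set.exists_ne_of_one_lt_ncard (lt_of_lt_of_le one_lt_two h2) c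
  have := F1 A hu b hbc hbT.1
  rw [hbT.2] at this
  simp at this

lemma not_frozen_of_slush {v : Fin n} (hv : v ∈ Vslush A) (hnf : ¬ slushFrozen A v) :
    ¬ frozen A v := by
  classical
  rw [slushFrozen] at hnf
  push_neg at hnf
  obtain ⟨x, hxker, hxv⟩ := hnf
  set x0 : Fin n → ZMod 2 := fun w => if w ∈ Vslush A then x w else 0 with hx0def
  have hx0 : ∀ a : Fin m, matMulVec A x0 a =
      ∑ u : Fin n, if u ∈ Vslush A then A a u * x u else 0 := by
    intro a
    unfold matMulVec
    refine Finset.sum_congr rfl fun u _ => ?_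
    rw [hx0def]
    by_cases h : u ∈ Vslush A <;> simp [h]
  have key : ∀ a : Fin m, matMulVec A x0 a ≠ 0 →
      ∃ y : Fin n, A a y = 1 ∧ wVClim A y a = Msg.u := by
    intro a ha
    by_contra hno
    push_neg at hno
    have haC : a ∉ Cslush A := by
      intro haC
      rw [hx0 a, hxker a haC] at ha
      exact ha rfl
    have hS : ¬ (2 ≤ ({y : Fin n | A a y = 1 ∧ wVClim A y a = Msg.s}).ncard) := by
      intro h2
      exact haC ⟨fun y hy => hno y hy, h2⟩
    rw [hx0 a] at ha
    obtain ⟨u0, _, hterm⟩ := Finset.exists_ne_zero_of_sum_ne_zero ha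
    have hu0V : u0 ∈ Vslush A := by
      by_contra h; rw [if_neg h] at hterm; exact hterm rfl
    rw [if_pos hu0V] at hterm
    have hau0 : A a u0 = 1 := by
      refine zmod2_eq_one fun h => ?_
      rw [h, zero_mul] at hterm; exact hterm rfl
    have hu0s : wVClim A u0 a = Msg.s := by
      cases hw : wVClim A u0 a with
      | f =>
        obtain ⟨b, _, hbe, hbf⟩ := F3 A hw
        exact absurd hbf (hu0V.1 b hbe)
      | s => rfl
      | u => exact absurd hw (hno u0 hau0)
    have hsub : ∀ y ∈ {y : Fin n | A a y = 1 ∧ wVClim A y a = Msg.s}, y = u0 := by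
      intro y hy
      have h1 : ({y : Fin n | A a y = 1 ∧ wVClim A y a = Msg.s}).ncard ≤ 1 := by omega
      exact (Set.ncard_le_one (Set.toFinite _)).1 h1 y hy u0 ⟨hau0, hu0s⟩
    have hf : ∀ y : Fin n, y ≠ u0 → A a y = 1 → wVClim A y a = Msg.f := by
      intro y hy hye
      cases hw : wVClim A y a with
      | f => rfl
      | s => exact absurd (hsub y ⟨hye, hw⟩) hy
      | u => exact absurd hw (hno y hye)
    exact (hu0V.1 a hau0) (F4 A hf)
  have hfix : ∀ a : Fin m, matMulVec A x0 a ≠ 0 →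
      ∃ z : Fin n → ZMod 2,
        (∀ w, z w ≠ 0 → ∃ c, A c w = 1 ∧ wVClim A w c = Msg.u) ∧
        (∀ b, b ≠ a → matMulVec A z b = 0) ∧ matMulVec A z a = 1 := by
    intro a ha
    obtain ⟨y, hy1, hy2⟩ := key a ha
    obtain ⟨t, ht⟩ := wVClim_exists_wp A hy2
    exact correction A t a y hy1 ht 1
  set Zc : Fin m → (Fin n → ZMod 2) :=
    fun a => if h : matMulVec A x0 a ≠ 0 then (hfix a h).choose else 0 with hZc
  have Zspec : ∀ a (h : matMulVec A x0 a ≠ 0),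
      (∀ w, Zc a w ≠ 0 → ∃ c, A c w = 1 ∧ wVClim A w c = Msg.u) ∧
      (∀ b, b ≠ a → matMulVec A (Zc a) b = 0) ∧ matMulVec A (Zc a) a = 1 := by
    intro a h; rw [hZc]; simp only [dif_pos h]; exact (hfix a h).choose_spec
  have Zzero : ∀ a, ¬ matMulVec A x0 a ≠ 0 → Zc a = 0 := by
    intro a h; rw [hZc]; simp only [dif_neg h]
  set xF : Fin n → ZMod 2 := x0 + ∑ a : Fin m, Zc a with hxF
  have hker : matMulVec A xF = 0 := by
    funext c
    rw [hxF, matMulVec_add, matMulVec_sum]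
    have hsum : ∑ a : Fin m, matMulVec A (Zc a) c = matMulVec A (Zc c) c := by
      refine Finset.sum_eq_single c ?_ (by simp)
      intro a _ hac
      by_cases h : matMulVec A x0 a ≠ 0
      · exact (Zspec a h).2.1 c (fun h' => hac h'.symm)
      · rw [Zzero a h]; simp [matMulVec]
    rw [hsum]
    by_cases h : matMulVec A x0 c ≠ 0
    · rw [(Zspec c h).2.2, zmod2_eq_one h, Pi.zero_apply]; decide
    · rw [Zzero c h]
      push_neg at h
      rw [h]; simp [matMulVec]
  have hxFv : xF v ≠ 0 := by
    have hZv : ∀ a : Fin m, Zc a v = 0 := by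
      intro a
      by_contra hZ
      by_cases h : matMulVec A x0 a ≠ 0
      · obtain ⟨c, hc1, hc2⟩ := (Zspec a h).1 v hZ
        exact vslush_no_u A hv c hc2
      · rw [Zzero a h] at hZ; exact hZ rfl
    have : xF v = x v := by
      rw [hxF]
      simp only [Pi.add_apply, Finset.sum_apply]
      rw [Finset.sum_eq_zero (fun a _ => hZv a), add_zero, hx0def]
      simp [hv]
    rw [this]; exact hxv
  intro hfz
  exact hxFv (hfz xF hker)

end Part3

section Part2
variable {m n : ℕ}

open Module in
lemma frozen_card_le (A : Mat m n) :
    ({v : Fin n | slushFrozen A v}).ncard ≤ (Cslush A).ncard := by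
  classical
  haveI : Fintype ↥(Cslush A) := Fintype.ofFinite _
  set S : Set (Fin n) := {v | slushFrozen A v} with hS
  haveI : Fintype ↥(Sᶜ) := Fintype.ofFinite _
  -- the linear map given by the slush minor rows
  set L : (Fin n → ZMod 2) →ₗ[ZMod 2] (↥(Cslush A) → ZMod 2) :=
    { toFun := fun x a => ∑ u : Fin n, if u ∈ Vslush A then A a.1 u * x u else 0
      map_add' := by
        intro x y
        funext a
        simp only [Pi.add_apply]
        rw [← Finset.sum_add_distrib]
        refine Finset.sum_congr rfl fun u _ => ?_
        by_cases h : u ∈ Vslush A <;> simp [h, mul_add]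
      map_smul' := by
        intro c x
        funext a
        simp only [RingHom.id_apply, Pi.smul_apply, smul_eq_mul]
        rw [Finset.mul_sum]
        refine Finset.sum_congr rfl fun u _ => ?_
        by_cases h : u ∈ Vslush A <;> simp [h, mul_left_comm] } with hL
  -- restriction to the complement of the frozen set is injective on ker L
  set res : ↥(LinearMap.ker L) →ₗ[ZMod 2] (↥(Sᶜ) → ZMod 2) :=
    { toFun := fun x w => x.1 w.1
      map_add' := fun x y => rfl
      map_smul' := fun c x => rfl } with hres
  have hinj : Function.Injective res := by
    rw [← LinearMap.ker_eq_bot]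
    rw [Submodule.eq_bot_iff]
    rintro ⟨x, hx⟩ hx0
    have hxk : ∀ a ∈ Cslush A,
        (∑ u : Fin n, if u ∈ Vslush A then A a u * x u else 0) = 0 := by
      intro a ha
      have := LinearMap.mem_ker.1 hx
      exact congrFun this ⟨a, ha⟩
    ext w
    by_cases hw : slushFrozen A w
    · exact hw x hxk
    · exact congrFun hx0 ⟨w, hw⟩
  have hrank := LinearMap.finrank_range_add_finrank_ker L
  have hdom : finrank (ZMod 2) (Fin n → ZMod 2) = n := by
    rw [Module.finrank_pi, Fintype.card_fin]
  have hrange : finrank (ZMod 2) ↥(LinearMap.range L) ≤ (Cslush A).ncard := by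
    calc finrank (ZMod 2) ↥(LinearMap.range L)
        ≤ finrank (ZMod 2) (↥(Cslush A) → ZMod 2) :=
          (LinearMap.range L).finrank_le
      _ = (Cslush A).ncard := by
          rw [Module.finrank_pi, ← Nat.card_eq_fintype_card, Nat.card_coe_set_eq]
  have hker : finrank (ZMod 2) ↥(LinearMap.ker L) ≤ (Sᶜ).ncard := by
    calc finrank (ZMod 2) ↥(LinearMap.ker L)
        ≤ finrank (ZMod 2) (↥(Sᶜ) → ZMod 2) :=
          LinearMap.finrank_le_finrank_of_injective hinj
      _ = (Sᶜ).ncard := by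
          rw [Module.finrank_pi, ← Nat.card_eq_fintype_card, Nat.card_coe_set_eq]
  have hcompl : S.ncard + (Sᶜ).ncard = n := by
    rw [Set.ncard_add_ncard_compl, Nat.card_eq_fintype_card, Fintype.card_fin]
  rw [hdom] at hrank
  omega

end Part2


/-- the set `U = V_s(A) \ F(A_s)` of slush variables not frozen in the
slush minor is a flipper of `A_s`, has size at least `|V_s(A)| − |C_s(A)|`, and is
disjoint from `F(A)`. -/
theorem statement19 {m n : ℕ} (A : Mat m n)
    (U : Set (Fin n)) (hU : U = {v | v ∈ Vslush A ∧ ¬ slushFrozen A v}) :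
    (∀ a ∈ Cslush A, (∃ v ∈ U, A a v = 1) →
        2 ≤ ({v : Fin n | v ∈ U ∧ A a v = 1}).ncard) ∧
    ((Vslush A).ncard : ℤ) - ((Cslush A).ncard : ℤ) ≤ (U.ncard : ℤ) ∧
    (∀ v ∈ U, ¬ frozen A v) := by
  classical
  refine ⟨?_, ?_, ?_⟩
  · -- flipper property
    intro a haC ⟨v, hvU, hav⟩
    by_contra hlt
    push_neg at hlt
    have h1 : ({w : Fin n | w ∈ U ∧ A a w = 1}).ncard ≤ 1 := by omega
    have hsub : ∀ w ∈ {w : Fin n | w ∈ U ∧ A a w = 1}, w = v :=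
      fun w hw => (Set.ncard_le_one (Set.toFinite _)).1 h1 w hw v ⟨hvU, hav⟩
    have hvU' := hvU
    rw [hU] at hvU'
    obtain ⟨hvV, hvnf⟩ := hvU'
    rw [slushFrozen] at hvnf
    push_neg at hvnf
    obtain ⟨x, hxker, hxv⟩ := hvnf
    have hxv1 : x v = 1 := zmod2_eq_one hxv
    have hzero := hxker a haC
    have hone : (∑ u : Fin n, if u ∈ Vslush A then A a u * x u else 0) = 1 := by
      rw [Finset.sum_eq_single v]
      · rw [if_pos hvV, hav, hxv1, one_mul]
      · intro u _ huv
        by_cases huV : u ∈ Vslush A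
        · rw [if_pos huV]
          by_cases hau : A a u = 1
          · by_cases hufr : slushFrozen A u
            · rw [hufr x hxker, mul_zero]
            · have : u ∈ {w : Fin n | w ∈ U ∧ A a w = 1} := by
                refine ⟨?_, hau⟩
                rw [hU]; exact ⟨huV, hufr⟩
              exact absurd (hsub u this) huv
          · have : A a u = 0 := by
              rcases (by decide : ∀ z : ZMod 2, z = 0 ∨ z = 1) (A a u) with h | h
              · exact h
              · exact absurd h hau
            rw [this, zero_mul]
        · rw [if_neg huV]
      · intro h; exact absurd (Finset.mem_univ v) h
    rw [hzero] at hone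
    exact one_ne_zero hone.symm
  · -- size bound
    have hdiff : U = Vslush A \ {v | slushFrozen A v} := by
      rw [hU]; ext v; simp [Set.mem_diff]
    have hsplit := Set.ncard_inter_add_ncard_diff_eq_ncard (Vslush A)
      {v | slushFrozen A v} (Set.toFinite _)
    have hint : (Vslush A ∩ {v | slushFrozen A v}).ncard ≤ (Cslush A).ncard :=
      le_trans (Set.ncard_le_ncard Set.inter_subset_right (Set.toFinite _))
        (frozen_card_le A)
    rw [hdiff]
    have := hsplit
    omega
  · intro v hv
    rw [hU] at hv
    exact not_frozen_of_slush A hv.1 hv.2
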